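/- Let $x:[0,\infty)\to\mathbb{R}^n$ solve $\dot x_i = \mathrm{sign}\big(\sum_j a_{ij}(x_j-x_i)\big)\big|\sum_j a_{ij}(x_j-x_i)\big|^{\alpha}$ with $A$ symmetric nonnegative, zero diagonal, connected graph, and $0<\alpha<1$. Define $V_1(t)=\tfrac14\sum_{i,j}a_{ij}(x_j(t)-x_i(t))^2 = \tfrac12 x(t)^T L(A) x(t)$. Then $\frac{dV_1}{dt}(t) \le -\left(2\lambda_2(L_A)\right)^{\frac{1+\alpha}{2}} V_1(t)^{\frac{1+\alpha}{2}}$ whenever $V_1(t)>0$, and consequently $V_1(t)=0$ for all $t \ge t_1 = \frac{(2V_1(0))^{\frac{1-\alpha}{2}}}{(1-\alpha)\lambda_2(L_A)^{\frac{1+\alpha}{2}}}$; in particular all states agree in finite time. -/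

import Mathlib

/-!
Along the protocol the disagreement `V = ¼ ∑ aᵢⱼ (xⱼ - xᵢ)² = ½ xᵀLx` decays at rate
`∑ᵢ |(Lx)ᵢ|^(1+α)`. Subadditivity of `s ↦ s^((1+α)/2)` bounds this rate below by
`(xᵀL²x)^((1+α)/2)`, and in an eigenbasis of `L`, where every eigenvalue is `0` or at least `λ₂`,
`xᵀL²x ≥ λ₂ xᵀLx = 2λ₂V`. Thus `V' ≤ -c V^p` with `p = (1+α)/2 < 1`, so `V^(1-p) + c(1-p)t` is
nonincreasing while `V > 0`, which forces `V` to vanish by time `V(0)^(1-p)/(c(1-p))`.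
Zero disagreement on a connected graph means that all states agree.
-/

open Finset Matrix

def graphLaplacian {n : ℕ} (A : Matrix (Fin n) (Fin n) ℝ) : Matrix (Fin n) (Fin n) ℝ :=
  fun i j => if i = j then ∑ k ∈ univ.erase i, A i k else -A i j

def WeightConnected {n : ℕ} (A : Matrix (Fin n) (Fin n) ℝ) : Prop :=
  ∀ i j : Fin n, Relation.ReflTransGen (fun a b => 0 < A a b) i j

lemma Real.rpow_sum_le_sum_rpow {ι : Type*} (s : Finset ι) {f : ι → ℝ} (hf : ∀ i ∈ s, 0 ≤ f i)
    {p : ℝ} (hp0 : 0 < p) (hp1 : p ≤ 1) : (∑ i ∈ s, f i) ^ p ≤ ∑ i ∈ s, f i ^ p := by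
  classical
  induction s using Finset.induction with
  | empty => simp [Real.zero_rpow hp0.ne']
  | insert a s ha ih =>
    rw [sum_insert ha, sum_insert ha]
    have hfs : ∀ i ∈ s, 0 ≤ f i := fun i hi => hf i (mem_insert_of_mem hi)
    calc (f a + ∑ i ∈ s, f i) ^ p ≤ f a ^ p + (∑ i ∈ s, f i) ^ p :=
          Real.rpow_add_le_add_rpow (hf a (mem_insert_self a s)) (sum_nonneg hfs) hp0.le hp1
      _ ≤ f a ^ p + ∑ i ∈ s, f i ^ p := by gcongr; exact ih hfs

lemma Real.rpow_sum_sq_le_sum_abs_rpow {ι : Type*} (s : Finset ι) (w : ι → ℝ) {q : ℝ}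
    (hq0 : 0 < q) (hq2 : q ≤ 2) : (∑ i ∈ s, w i ^ 2) ^ (q / 2) ≤ ∑ i ∈ s, |w i| ^ q := by
  have hsq : ∀ i, (w i ^ 2) ^ (q / 2) = |w i| ^ q := fun i => by
    rw [← sq_abs, ← Real.rpow_natCast, ← Real.rpow_mul (abs_nonneg _)]
    congr 1
    push_cast
    ring
  simpa only [hsq] using
    Real.rpow_sum_le_sum_rpow (p := q / 2) s (fun i _ => sq_nonneg (w i)) (by positivity)
      (by linarith)

lemma Real.mul_sign_mul_abs_rpow (a : ℝ) {α : ℝ} (hα : 1 + α ≠ 0) :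
    a * (Real.sign a * |a| ^ α) = |a| ^ (1 + α) := by
  rcases eq_or_ne a 0 with rfl | ha
  · simp [Real.zero_rpow hα]
  · rw [add_comm, Real.rpow_add_one (abs_ne_zero.2 ha)]
    rcases ha.lt_or_gt with h | h
    · rw [Real.sign_of_neg h, abs_of_neg h]; ring
    · rw [Real.sign_of_pos h, abs_of_pos h]; ring

noncomputable def disagreement {n : ℕ} (A : Matrix (Fin n) (Fin n) ℝ) (v : Fin n → ℝ) : ℝ :=
  (1 / 4) * ∑ i, ∑ j, A i j * (v j - v i) ^ 2

section Laplacian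

variable {n : ℕ} {A : Matrix (Fin n) (Fin n) ℝ}

lemma graphLaplacian_mulVec_apply (A : Matrix (Fin n) (Fin n) ℝ) (v : Fin n → ℝ) (i : Fin n) :
    (graphLaplacian A *ᵥ v) i = -∑ j, A i j * (v j - v i) := by
  have hoff : ∀ j ∈ univ.erase i, graphLaplacian A i j * v j = -(A i j * v j) := fun j hj => by
    simp [graphLaplacian, (ne_of_mem_erase hj).symm]
  rw [mulVec, dotProduct, ← add_sum_erase _ _ (mem_univ i),
    ← add_sum_erase _ _ (mem_univ i), sum_congr rfl hoff]
  simp only [graphLaplacian, if_pos, sub_self, mul_zero, zero_add, sum_mul, ← sum_neg_distrib,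
    ← sum_add_distrib]
  exact sum_congr rfl fun j _ => by ring

lemma Matrix.IsSymm.sum_sum_mul_sub_mul_sub (hA : A.IsSymm) (v w : Fin n → ℝ) :
    ∑ i, ∑ j, A i j * ((v j - v i) * (w j - w i)) = 2 * (graphLaplacian A *ᵥ v ⬝ᵥ w) := by
  have hswap : ∑ i, ∑ j, A i j * (v j - v i) * w j = -∑ i, ∑ j, A i j * (v j - v i) * w i := by
    rw [sum_comm, ← sum_neg_distrib]
    refine sum_congr rfl fun i _ => ?_
    rw [← sum_neg_distrib]
    refine sum_congr rfl fun j _ => ?_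
    rw [hA.apply i j]
    ring
  calc ∑ i, ∑ j, A i j * ((v j - v i) * (w j - w i))
      = ∑ i, ∑ j, A i j * (v j - v i) * w j - ∑ i, ∑ j, A i j * (v j - v i) * w i := by
        rw [← sum_sub_distrib]
        refine sum_congr rfl fun i _ => ?_
        rw [← sum_sub_distrib]
        exact sum_congr rfl fun j _ => by ring
    _ = 2 * (graphLaplacian A *ᵥ v ⬝ᵥ w) := by
        simp only [hswap, dotProduct, graphLaplacian_mulVec_apply, neg_mul, sum_mul,
          sum_neg_distrib]
        ring

lemma Matrix.IsSymm.dotProduct_graphLaplacian_mulVec (hA : A.IsSymm) (v : Fin n → ℝ) :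
    v ⬝ᵥ graphLaplacian A *ᵥ v = 2 * disagreement A v := by
  have h := hA.sum_sum_mul_sub_mul_sub v v
  simp only [← sq] at h
  rw [disagreement, h, dotProduct_comm]
  ring

lemma disagreement_nonneg (hA : ∀ i j, 0 ≤ A i j) (v : Fin n → ℝ) : 0 ≤ disagreement A v :=
  mul_nonneg (by norm_num) <| sum_nonneg fun i _ => sum_nonneg fun j _ =>
    mul_nonneg (hA i j) (sq_nonneg _)

lemma Matrix.IsSymm.hasDerivAt_disagreement (hA : A.IsSymm) {x : ℝ → Fin n → ℝ}
    {x' : Fin n → ℝ} {t : ℝ} (hx : ∀ i, HasDerivAt (fun s => x s i) (x' i) t) :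
    HasDerivAt (fun s => disagreement A (x s)) (graphLaplacian A *ᵥ x t ⬝ᵥ x') t := by
  have h : HasDerivAt (fun s => disagreement A (x s))
      ((1 / 4) * ∑ i, ∑ j, A i j * (2 * (x t j - x t i) ^ (2 - 1) * (x' j - x' i))) t :=
    .const_mul _ <| .fun_sum fun i _ => .fun_sum fun j _ =>
      .const_mul _ <| ((hx j).sub (hx i)).pow 2
  convert h using 1
  have hterm : ∀ i j, A i j * (2 * (x t j - x t i) ^ (2 - 1) * (x' j - x' i))
      = 2 * (A i j * ((x t j - x t i) * (x' j - x' i))) := fun i j => by ring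
  simp only [hterm, ← mul_sum, hA.sum_sum_mul_sub_mul_sub]
  ring

end Laplacian

section Spectral

variable {ι : Type*} [Fintype ι] [DecidableEq ι] {M T : Matrix ι ι ℝ} {μ : ι → ℝ}

lemma dotProduct_mulVec_eq_sum_of_eq_diagonal (hM : M = Tᵀ * diagonal μ * T) (v : ι → ℝ) :
    v ⬝ᵥ M *ᵥ v = ∑ i, μ i * (T *ᵥ v) i ^ 2 := by
  rw [hM, Matrix.mul_assoc, ← mulVec_mulVec, dotProduct_mulVec, vecMul_transpose,
    ← mulVec_mulVec]
  simp only [dotProduct, mulVec_diagonal]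
  exact sum_congr rfl fun i _ => by ring

lemma mulVec_dotProduct_mulVec_eq_sum_of_eq_diagonal (hT : Tᵀ * T = 1)
    (hM : M = Tᵀ * diagonal μ * T) (v : ι → ℝ) :
    M *ᵥ v ⬝ᵥ M *ᵥ v = ∑ i, μ i ^ 2 * (T *ᵥ v) i ^ 2 := by
  rw [hM, Matrix.mul_assoc, ← mulVec_mulVec, ← mulVec_mulVec, dotProduct_mulVec,
    vecMul_transpose, mulVec_mulVec, mulVec_mulVec, mul_eq_one_comm.mp hT, Matrix.one_mul]
  simp only [dotProduct, mulVec_diagonal]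
  exact sum_congr rfl fun i _ => by ring

lemma mul_dotProduct_mulVec_le_mulVec_dotProduct_mulVec (hT : Tᵀ * T = 1)
    (hM : M = Tᵀ * diagonal μ * T) {c : ℝ} (hc : 0 ≤ c) (hμ : ∀ i, μ i = 0 ∨ c ≤ μ i)
    (v : ι → ℝ) : c * (v ⬝ᵥ M *ᵥ v) ≤ M *ᵥ v ⬝ᵥ M *ᵥ v := by
  rw [dotProduct_mulVec_eq_sum_of_eq_diagonal hM,
    mulVec_dotProduct_mulVec_eq_sum_of_eq_diagonal hT hM, mul_sum]
  refine sum_le_sum fun i _ => ?_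
  have hcμ : c * μ i ≤ μ i ^ 2 := by
    rcases hμ i with h | h
    · simp [h]
    · nlinarith
  rw [← mul_assoc]
  exact mul_le_mul_of_nonneg_right hcμ (sq_nonneg _)

end Spectral

lemma Monotone.eq_or_apply_one_le {β : Type*} [Preorder β] {n : ℕ} {μ : Fin n → β}
    (hμ : Monotone μ) (hn : 1 < n) (i : Fin n) : μ i = μ ⟨0, by omega⟩ ∨ μ ⟨1, hn⟩ ≤ μ i := by
  rcases Nat.eq_zero_or_pos i.val with h | h
  · exact .inl (congrArg μ (Fin.ext h))
  · exact .inr (hμ (Fin.le_def.2 h))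

section FiniteTime

variable {V : ℝ → ℝ} {c p : ℝ}

lemma antitoneOn_rpow_add_mul_of_deriv_le {s : Set ℝ} (hs : Convex ℝ s) (hV : Differentiable ℝ V)
    (hpos : ∀ t ∈ s, 0 < V t) (hdV : ∀ t ∈ s, deriv V t ≤ -c * V t ^ p) (hp : p < 1) :
    AntitoneOn (fun t => V t ^ (1 - p) + c * (1 - p) * t) s := by
  have hg : ∀ t ∈ s, HasDerivAt (fun t => V t ^ (1 - p) + c * (1 - p) * t)
      (deriv V t * (1 - p) * V t ^ (1 - p - 1) + c * (1 - p)) t := fun t ht =>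
    ((hV t).hasDerivAt.rpow_const (.inl (hpos t ht).ne')).add
      ((hasDerivAt_id t).const_mul _ |>.congr_deriv (mul_one _))
  refine antitoneOn_of_deriv_nonpos hs (fun t ht => (hg t ht).continuousAt.continuousWithinAt)
    (fun t ht => (hg t (interior_subset ht)).differentiableAt.differentiableWithinAt)
    fun t ht => ?_
  have ht := interior_subset ht
  have hcancel : V t ^ p * V t ^ (1 - p - 1) = 1 := by
    rw [← Real.rpow_add (hpos t ht)]
    simp
  have hfactor : 0 ≤ (1 - p) * V t ^ (1 - p - 1) :=
    mul_nonneg (by linarith) (Real.rpow_nonneg (hpos t ht).le _)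
  rw [(hg t ht).deriv]
  linear_combination mul_le_mul_of_nonneg_right (hdV t ht) hfactor - c * (1 - p) * hcancel

theorem eq_zero_of_deriv_le_neg_mul_rpow (hV : Differentiable ℝ V) (hV0 : ∀ t, 0 ≤ V t)
    (hc : 0 < c) (hp : p < 1) (hdV : ∀ t, 0 < V t → deriv V t ≤ -c * V t ^ p) {t : ℝ}
    (ht : V 0 ^ (1 - p) / (c * (1 - p)) ≤ t) : V t = 0 := by
  -- where `V` vanishes it is minimal, so its derivative vanishes too
  have hanti : Antitone V := antitone_of_deriv_nonpos hV fun s => by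
    rcases (hV0 s).eq_or_lt with h | h
    · exact (IsLocalMin.deriv_eq_zero (.of_forall fun r => h ▸ hV0 r)).le
    · nlinarith [hdV s h, Real.rpow_nonneg (hV0 s) p]
  by_contra hne
  have htpos : 0 < V t := (hV0 t).lt_of_ne' hne
  have hcp : 0 < c * (1 - p) := mul_pos hc (by linarith)
  have ht0 : 0 ≤ t := (div_nonneg (Real.rpow_nonneg (hV0 0) _) hcp.le).trans ht
  have hpos : ∀ s ∈ Set.Icc 0 t, 0 < V s := fun s hs => htpos.trans_le (hanti hs.2)
  have hg := antitoneOn_rpow_add_mul_of_deriv_le (convex_Icc 0 t) hV hpos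
    (fun s hs => hdV s (hpos s hs)) hp
    (Set.left_mem_Icc.2 ht0) (Set.right_mem_Icc.2 ht0) ht0
  rw [div_le_iff₀ hcp] at ht
  have := Real.rpow_pos_of_pos htpos (1 - p)
  simp only [mul_zero, add_zero] at hg
  linarith

end FiniteTime

section Protocol

variable {n : ℕ} {A : Matrix (Fin n) (Fin n) ℝ}

lemma Matrix.IsSymm.hasDerivAt_disagreement_of_protocol (hA : A.IsSymm) {α : ℝ}
    (hα : 1 + α ≠ 0) {x : ℝ → Fin n → ℝ} {t : ℝ}
    (hode : ∀ i, HasDerivAt (fun s => x s i)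
      (Real.sign (∑ j, A i j * (x t j - x t i)) * |∑ j, A i j * (x t j - x t i)| ^ α) t) :
    HasDerivAt (fun s => disagreement A (x s))
      (-∑ i, |(graphLaplacian A *ᵥ x t) i| ^ (1 + α)) t := by
  convert hA.hasDerivAt_disagreement hode using 1
  simp only [dotProduct, graphLaplacian_mulVec_apply, abs_neg, neg_mul,
    Real.mul_sign_mul_abs_rpow _ hα, sum_neg_distrib]

lemma Matrix.IsSymm.rpow_mul_disagreement_rpow_le (hA : A.IsSymm)
    (hnonneg : ∀ i j, 0 ≤ A i j) {T : Matrix (Fin n) (Fin n) ℝ} {μ : Fin n → ℝ}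
    (hT : Tᵀ * T = 1) (hL : graphLaplacian A = Tᵀ * diagonal μ * T) {c : ℝ} (hc : 0 ≤ c)
    (hμ : ∀ i, μ i = 0 ∨ c ≤ μ i) {q : ℝ} (hq0 : 0 < q) (hq2 : q ≤ 2) (v : Fin n → ℝ) :
    (2 * c) ^ (q / 2) * disagreement A v ^ (q / 2) ≤ ∑ i, |(graphLaplacian A *ᵥ v) i| ^ q := by
  set w := graphLaplacian A *ᵥ v
  have hquad : v ⬝ᵥ w = 2 * disagreement A v := hA.dotProduct_graphLaplacian_mulVec v
  have hgap : c * (v ⬝ᵥ w) ≤ ∑ i, w i ^ 2 := by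
    simpa only [dotProduct, ← sq] using
      mul_dotProduct_mulVec_le_mulVec_dotProduct_mulVec hT hL hc hμ v
  calc (2 * c) ^ (q / 2) * disagreement A v ^ (q / 2)
      = (c * (v ⬝ᵥ w)) ^ (q / 2) := by
        rw [← Real.mul_rpow (by positivity) (disagreement_nonneg hnonneg v), hquad,
          mul_left_comm, mul_assoc]
    _ ≤ (∑ i, w i ^ 2) ^ (q / 2) := by
        gcongr
        rw [hquad]
        exact mul_nonneg hc (mul_nonneg zero_le_two (disagreement_nonneg hnonneg v))
    _ ≤ ∑ i, |w i| ^ q := Real.rpow_sum_sq_le_sum_abs_rpow _ w hq0 hq2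

lemma WeightConnected.apply_eq {β : Type*} (hA : WeightConnected A) {v : Fin n → β}
    (hv : ∀ a b, 0 < A a b → v a = v b) (i j : Fin n) : v i = v j := by
  induction hA i j with
  | refl => rfl
  | tail _ hbc ih => exact ih.trans (hv _ _ hbc)

lemma apply_eq_of_disagreement_eq_zero (hnonneg : ∀ i j, 0 ≤ A i j) {v : Fin n → ℝ}
    (hv : disagreement A v = 0) {a b : Fin n} (hab : 0 < A a b) : v a = v b := by
  have hterm : ∀ i j, 0 ≤ A i j * (v j - v i) ^ 2 := fun i j =>
    mul_nonneg (hnonneg i j) (sq_nonneg _)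
  have hsum : ∑ i, ∑ j, A i j * (v j - v i) ^ 2 = 0 := by
    simpa [disagreement] using hv
  have hab0 : A a b * (v b - v a) ^ 2 = 0 :=
    (sum_eq_zero_iff_of_nonneg fun j _ => hterm a j).1
      ((sum_eq_zero_iff_of_nonneg fun i _ => sum_nonneg fun j _ => hterm i j).1 hsum a
        (mem_univ a)) b (mem_univ b)
  have := pow_eq_zero_iff two_ne_zero |>.1 <| (mul_eq_zero.1 hab0).resolve_left hab.ne'
  linarith

end Protocol

lemma rpow_div_mul_eq_two_mul_rpow_div {v l α : ℝ} (hv : 0 ≤ v) (hl : 0 ≤ l) :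
    v ^ (1 - (1 + α) / 2) / ((2 * l) ^ ((1 + α) / 2) * (1 - (1 + α) / 2))
      = (2 * v) ^ ((1 - α) / 2) / ((1 - α) * l ^ ((1 + α) / 2)) := by
  have htwo : (2 : ℝ) ^ ((1 - α) / 2) = 2 / 2 ^ ((1 + α) / 2) := by
    rw [eq_div_iff (by positivity), ← Real.rpow_add two_pos,
      show (1 - α) / 2 + (1 + α) / 2 = 1 by ring, Real.rpow_one]
  rw [Real.mul_rpow zero_le_two hl, Real.mul_rpow zero_le_two hv, htwo,
    show 1 - (1 + α) / 2 = (1 - α) / 2 by ring]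
  generalize 1 - α = a
  ring

theorem finite_time_agreement_protocol_one {n : ℕ} (hn : 2 ≤ n)
    (A : Matrix (Fin n) (Fin n) ℝ)
    (hsymm : A.IsSymm) (hnonneg : ∀ i j, 0 ≤ A i j)
    (hconn : WeightConnected A)
    (α : ℝ) (hα0 : 0 < α) (hα1 : α < 1)
    -- `μ` lists the eigenvalues of the Laplacian of `A` in increasing order, so that
    -- `μ ⟨1, _⟩` is the second smallest eigenvalue `λ₂(L_A)`:
    (μ : Fin n → ℝ) (T : Matrix (Fin n) (Fin n) ℝ)
    (hT : Tᵀ * T = 1)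
    (hdiagz : graphLaplacian A = Tᵀ * Matrix.diagonal μ * T)
    (hmono : Monotone μ)
    (hμ0 : μ ⟨0, by omega⟩ = 0)
    (hmu2 : 0 < μ ⟨1, by omega⟩)
    (x : ℝ → Fin n → ℝ)
    (hode : ∀ (t : ℝ) (i : Fin n), HasDerivAt (fun s => x s i)
      (Real.sign (∑ j, A i j * (x t j - x t i)) *
        |∑ j, A i j * (x t j - x t i)| ^ α) t)
    (V1 : ℝ → ℝ)
    (hV1 : V1 = fun t => (1 / 4) * ∑ i, ∑ j, A i j * (x t j - x t i) ^ 2) :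
    (∀ t : ℝ, 0 < V1 t →
        deriv V1 t ≤ -((2 * μ ⟨1, by omega⟩) ^ ((1 + α) / 2)) * V1 t ^ ((1 + α) / 2)) ∧
      (∀ t : ℝ,
        (2 * V1 0) ^ ((1 - α) / 2) / ((1 - α) * μ ⟨1, by omega⟩ ^ ((1 + α) / 2)) ≤ t →
        V1 t = 0 ∧ ∀ i j : Fin n, x t i = x t j) := by
  obtain rfl : V1 = fun t => disagreement A (x t) := hV1
  have hderiv : ∀ t, HasDerivAt (fun s => disagreement A (x s))
      (-∑ i, |(graphLaplacian A *ᵥ x t) i| ^ (1 + α)) t := fun t =>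
    hsymm.hasDerivAt_disagreement_of_protocol (by linarith) (hode t)
  have hgap : ∀ i, μ i = 0 ∨ μ ⟨1, by omega⟩ ≤ μ i := fun i =>
    hμ0 ▸ hmono.eq_or_apply_one_le (by omega) i
  have hdecay : ∀ t, 0 < disagreement A (x t) → deriv (fun s => disagreement A (x s)) t ≤
      -((2 * μ ⟨1, by omega⟩) ^ ((1 + α) / 2)) * disagreement A (x t) ^ ((1 + α) / 2) :=
    fun t _ => by
      rw [(hderiv t).deriv, neg_mul, neg_le_neg_iff]
      exact hsymm.rpow_mul_disagreement_rpow_le hnonneg hT hdiagz hmu2.le hgap (by linarith)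
        (by linarith) (x t)
  refine ⟨hdecay, fun t ht => ?_⟩
  -- `t₁ = V(0)^(1-p) / (c(1-p))` for `p = (1+α)/2` and `c = (2λ₂)^p`
  rw [← rpow_div_mul_eq_two_mul_rpow_div (disagreement_nonneg hnonneg _) hmu2.le] at ht
  have hzero := eq_zero_of_deriv_le_neg_mul_rpow (fun s => (hderiv s).differentiableAt)
    (fun s => disagreement_nonneg hnonneg _) (by positivity) (by linarith) hdecay ht
  exact ⟨hzero, hconn.apply_eq fun a b hab => apply_eq_of_disagreement_eq_zero hnonneg hzero hab⟩
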